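/- arXiv:1907.03543 — 3 statements merged into one kernel-verified Lean document; each statement's English description precedes it below -/
import Mathlib

section
/- Let {φ_k}_{k≥0} and {ψ_m}_{m≥0} be asymptotic scales on a domain D with respect to a common limit L (i.e. φ_{k+1} = o(φ_k) and ψ_{m+1} = o(ψ_m)). Suppose f has an asymptotic expansion f ∼ Σ_k c_k φ_k, and each ψ_m has an asymptotic expansion ψ_m ∼ Σ_{k≥m} c_{m,k} φ_k with c_{m,m} ≠ 0. Then f has an asymptotic expansion f ∼ Σ_m c'_m ψ_m, where the coefficients c'_m are determined by the triangular system c_k = Σ_{m=0}^{k} c'_m c_{m,k} for all k ≥ 0. -/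
open Asymptotics Filter

/-!
Each `ψ m` is asymptotic to its leading term `c_{m,m} φ m`, so `φ R = O(ψ R)`.
Substituting the expansions of the `ψ m` (truncated at order `R`) into `Σ_{m<R} c'_m ψ_m`
and using the triangular system shows that `f - Σ_{m<R} c'_m ψ_m` is `O(φ R)`, hence `O(ψ R)`.
-/

theorem Finset.sum_range_mul_sum_range_eq_of_triangular {𝕜 : Type*} [CommSemiring 𝕜]
    {a : ℕ → ℕ → 𝕜} {b c : ℕ → 𝕜} (hlow : ∀ m k, k < m → a m k = 0)
    (hc : ∀ k, c k = ∑ m ∈ range (k + 1), b m * a m k) (v : ℕ → 𝕜) (R : ℕ) :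
    ∑ m ∈ range R, b m * ∑ k ∈ range R, a m k * v k = ∑ k ∈ range R, c k * v k := by
  simp only [mul_sum, ← mul_assoc]
  rw [sum_comm]
  refine sum_congr rfl fun k hk => ?_
  rw [← sum_mul, hc k]
  congr 1
  refine (sum_subset (range_subset_range.mpr (mem_range.mp hk)) fun m _ hm => ?_).symm
  rw [hlow m k (by simpa using hm), mul_zero]

namespace Asymptotics

variable {α : Type*} {l : Filter α}

theorem isBigO_of_sub_const_mul_isLittleO {f g : α → ℝ} {a : ℝ} (ha : a ≠ 0)
    (h : (fun x => g x - a * f x) =o[l] f) : f =O[l] g := by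
  have hequiv : IsEquivalent l g (fun x => a * f x) :=
    h.trans_isBigO (isBigO_self_const_mul ha f l)
  exact (isBigO_self_const_mul ha f l).trans hequiv.symm.isBigO

theorem isBigO_of_expansion_leading {φ : ℕ → α → ℝ} {g : α → ℝ} {a : ℕ → ℝ} {m : ℕ}
    (hφ : φ (m + 1) =o[l] φ m)
    (hg : (fun x => g x - ∑ k ∈ Finset.range (m + 1), a k * φ k x) =O[l] φ (m + 1))
    (hlow : ∀ k < m, a k = 0) (hm : a m ≠ 0) : φ m =O[l] g := by
  have hleading : ∀ x, ∑ k ∈ Finset.range (m + 1), a k * φ k x = a m * φ m x := fun x => by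
    rw [Finset.sum_range_succ, Finset.sum_eq_zero fun k hk => by
      rw [hlow k (Finset.mem_range.mp hk), zero_mul], zero_add]
  refine isBigO_of_sub_const_mul_isLittleO hm ?_
  simpa only [hleading] using hg.trans_isLittleO hφ

end Asymptotics

theorem stmt_10_general {α : Type*} (l : Filter α) (φ ψ : ℕ → α → ℝ)
    (hφ : ∀ k, (φ (k + 1)) =o[l] (φ k))
    (f : α → ℝ) (c : ℕ → ℝ)
    (hf : ∀ R : ℕ, (fun x => f x - ∑ k ∈ Finset.range R, c k * φ k x) =O[l] (φ R))
    (cmk : ℕ → ℕ → ℝ)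
    (hlow : ∀ m k, k < m → cmk m k = 0)
    (hψexp : ∀ m R : ℕ,
      (fun x => ψ m x - ∑ k ∈ Finset.range R, cmk m k * φ k x) =O[l] (φ R))
    (hdiag : ∀ m, cmk m m ≠ 0)
    (c' : ℕ → ℝ)
    (hc' : ∀ k, c k = ∑ m ∈ Finset.range (k + 1), c' m * cmk m k) :
    ∀ R : ℕ, (fun x => f x - ∑ m ∈ Finset.range R, c' m * ψ m x) =O[l] (ψ R) := by
  intro R
  have hφψ : φ R =O[l] ψ R :=
    isBigO_of_expansion_leading (hφ R) (hψexp R (R + 1)) (hlow R) (hdiag R)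
  have hremainders : (fun x => ∑ m ∈ Finset.range R,
      c' m * (ψ m x - ∑ k ∈ Finset.range R, cmk m k * φ k x)) =O[l] φ R :=
    IsBigO.fun_sum fun m _ => (hψexp m R).const_mul_left (c' m)
  have hsplit : (fun x => f x - ∑ m ∈ Finset.range R, c' m * ψ m x)
      = fun x => (f x - ∑ k ∈ Finset.range R, c k * φ k x)
        - ∑ m ∈ Finset.range R, c' m * (ψ m x - ∑ k ∈ Finset.range R, cmk m k * φ k x) := by
    funext x
    simp only [mul_sub, Finset.sum_sub_distrib,
      Finset.sum_range_mul_sum_range_eq_of_triangular hlow hc']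
    ring
  rw [hsplit]
  exact ((hf R).sub hremainders).trans hφψ

/-- Change of asymptotic scale: if `f ∼ Σ c_k φ_k`, each `ψ_m ∼ Σ_{k≥m} c_{m,k} φ_k`
with `c_{m,m} ≠ 0`, and `c'_m` solves the triangular system
`c_k = Σ_{m≤k} c'_m c_{m,k}`, then `f ∼ Σ c'_m ψ_m`. -/
theorem stmt_10 {α : Type*} (l : Filter α) (φ ψ : ℕ → α → ℝ)
    (hφ : ∀ k, (φ (k + 1)) =o[l] (φ k))
    (hψ : ∀ m, (ψ (m + 1)) =o[l] (ψ m))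
    (f : α → ℝ) (c : ℕ → ℝ)
    (hf : ∀ R : ℕ, (fun x => f x - ∑ k ∈ Finset.range R, c k * φ k x) =O[l] (φ R))
    (cmk : ℕ → ℕ → ℝ)
    (hlow : ∀ m k, k < m → cmk m k = 0)
    (hψexp : ∀ m R : ℕ,
      (fun x => ψ m x - ∑ k ∈ Finset.range R, cmk m k * φ k x) =O[l] (φ R))
    (hdiag : ∀ m, cmk m m ≠ 0)
    (c' : ℕ → ℝ)
    (hc' : ∀ k, c k = ∑ m ∈ Finset.range (k + 1), c' m * cmk m k) :
    ∀ R : ℕ, (fun x => f x - ∑ m ∈ Finset.range R, c' m * ψ m x) =O[l] (ψ R) :=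
  stmt_10_general l φ ψ hφ f c hf cmk hlow hψexp hdiag c' hc'
end

section
/- The function x ↦ Γ(n − x − 1/2)·Γ(x − 1/2) / (log²(1 + n − x)·log²(1 + x)) is convex on the interval (1/2, n − 1/2) for integer n ≥ 2, and hence for x ∈ [2, n−2] it is bounded above by its value at x = 2, namely Γ(n − 5/2)Γ(3/2)/(log²(n−1)·log²(3)). -/
open Real Set

private lemma my_neg_log_convex : ConvexOn ℝ (Ioi (0:ℝ)) (fun x => -Real.log x) :=
  strictConcaveOn_log_Ioi.concaveOn.neg

private lemma my_exp_comp {s : Set ℝ} {f : ℝ → ℝ} (hf : ConvexOn ℝ s f) :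
    ConvexOn ℝ s (fun x => Real.exp (f x)) := by
  refine ⟨hf.1, fun x hx y hy a b ha hb hab => ?_⟩
  calc Real.exp (f (a • x + b • y)) ≤ Real.exp (a • f x + b • f y) :=
        Real.exp_le_exp.2 (hf.2 hx hy ha hb hab)
    _ ≤ a • Real.exp (f x) + b • Real.exp (f y) := by
        simpa [smul_eq_mul] using (convexOn_exp.2 (mem_univ (f x)) (mem_univ (f y)) ha hb hab)

private lemma my_reflect {s : Set ℝ} {f : ℝ → ℝ} (c : ℝ) (hf : ConvexOn ℝ s f) :
    ConvexOn ℝ {x | c - x ∈ s} (fun x => f (c - x)) := by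
  constructor
  · intro x hx y hy a b ha hb hab
    have h : c - (a • x + b • y) = a • (c - x) + b • (c - y) := by
      simp only [smul_eq_mul]; linear_combination (-c) * hab
    show c - (a • x + b • y) ∈ s
    rw [h]; exact hf.1 hx hy ha hb hab
  · intro x hx y hy a b ha hb hab
    have h : c - (a • x + b • y) = a • (c - x) + b • (c - y) := by
      simp only [smul_eq_mul]; linear_combination (-c) * hab
    simp only [h]
    exact hf.2 hx hy ha hb hab

private lemma my_shift {s : Set ℝ} {f : ℝ → ℝ} (d : ℝ) (hf : ConvexOn ℝ s f) :
    ConvexOn ℝ {x | x - d ∈ s} (fun x => f (x - d)) := by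
  constructor
  · intro x hx y hy a b ha hb hab
    have h : (a • x + b • y) - d = a • (x - d) + b • (y - d) := by
      simp only [smul_eq_mul]; linear_combination d * hab
    show (a • x + b • y) - d ∈ s
    rw [h]; exact hf.1 hx hy ha hb hab
  · intro x hx y hy a b ha hb hab
    have h : (a • x + b • y) - d = a • (x - d) + b • (y - d) := by
      simp only [smul_eq_mul]; linear_combination d * hab
    simp only [h]
    exact hf.2 hx hy ha hb hab

/-- `x ↦ -(2 * log (log (1+x)))` is convex on `(1/2, ∞)`. -/
private lemma my_neg_loglog : ConvexOn ℝ (Ioi ((1:ℝ)/2))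
    (fun x => -(2 * Real.log (Real.log (1 + x)))) := by
  refine ⟨convex_Ioi _, fun x hx y hy a b ha hb hab => ?_⟩
  rw [mem_Ioi] at hx hy
  have hu : 0 < Real.log (1 + x) := Real.log_pos (by linarith)
  have hv : 0 < Real.log (1 + y) := Real.log_pos (by linarith)
  have hpos : 0 < a * Real.log (1 + x) + b * Real.log (1 + y) := by
    have hm : 0 < min (Real.log (1 + x)) (Real.log (1 + y)) := lt_min hu hv
    nlinarith [mul_le_mul_of_nonneg_left (min_le_left (Real.log (1 + x)) (Real.log (1 + y))) ha,
      mul_le_mul_of_nonneg_left (min_le_right (Real.log (1 + x)) (Real.log (1 + y))) hb]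
  have hconc : a * Real.log (1 + x) + b * Real.log (1 + y) ≤
      Real.log (1 + (a • x + b • y)) := by
    have h := strictConcaveOn_log_Ioi.concaveOn.2 (mem_Ioi.2 (by linarith : (0:ℝ) < 1 + x))
      (mem_Ioi.2 (by linarith : (0:ℝ) < 1 + y)) ha hb hab
    have heq : a • (1 + x) + b • (1 + y) = 1 + (a • x + b • y) := by
      simp only [smul_eq_mul]; linear_combination hab
    rw [heq] at h
    simpa [smul_eq_mul] using h
  have h1 : Real.log (a * Real.log (1 + x) + b * Real.log (1 + y)) ≤
      Real.log (Real.log (1 + (a • x + b • y))) := Real.log_le_log hpos hconc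
  have h2 := my_neg_log_convex.2 (mem_Ioi.2 hu) (mem_Ioi.2 hv) ha hb hab
  simp only [smul_eq_mul] at h1 h2 ⊢
  linarith [h1, h2]

/-- `x ↦ log Γ(x - 1/2) - 2 log log (1+x)` is convex on `(1/2, ∞)`. -/
private lemma my_g_convex : ConvexOn ℝ (Ioi ((1:ℝ)/2))
    (fun x => Real.log (Real.Gamma (x - 1/2)) - 2 * Real.log (Real.log (1 + x))) := by
  have hA := my_shift (1/2) Real.convexOn_log_Gamma
  have hset : {x : ℝ | x - 1/2 ∈ Ioi (0:ℝ)} = Ioi ((1:ℝ)/2) := by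
    ext x; simp [mem_Ioi, sub_pos]
  rw [hset] at hA
  have := hA.add my_neg_loglog
  refine this.congr fun x _ => ?_
  simp [Function.comp, sub_eq_add_neg]

/-- For an integer `n ≥ 2`, the function
`x ↦ Γ(n−x−1/2)Γ(x−1/2)/(log²(1+n−x)·log²(1+x))`
is convex on `(1/2, n−1/2)`, and hence on `[2, n−2]` it is bounded above by its value at
`x = 2`, namely `Γ(n−5/2)Γ(3/2)/(log²(n−1)·log²3)`. -/
theorem stmt_16 (n : ℕ) (hn : 2 ≤ n) :
    ConvexOn ℝ (Set.Ioo (1 / 2 : ℝ) ((n : ℝ) - 1 / 2))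
      (fun x => Real.Gamma ((n : ℝ) - x - 1 / 2) * Real.Gamma (x - 1 / 2) /
        (Real.log (1 + (n : ℝ) - x) ^ 2 * Real.log (1 + x) ^ 2)) ∧
    ∀ x ∈ Set.Icc (2 : ℝ) ((n : ℝ) - 2),
      Real.Gamma ((n : ℝ) - x - 1 / 2) * Real.Gamma (x - 1 / 2) /
        (Real.log (1 + (n : ℝ) - x) ^ 2 * Real.log (1 + x) ^ 2) ≤
      Real.Gamma ((n : ℝ) - 5 / 2) * Real.Gamma (3 / 2) /
        (Real.log ((n : ℝ) - 1) ^ 2 * Real.log 3 ^ 2) := by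
  set s : Set ℝ := Set.Ioo (1 / 2 : ℝ) ((n : ℝ) - 1 / 2) with hs
  -- the exponent function
  set F : ℝ → ℝ := fun x =>
    (Real.log (Real.Gamma (x - 1/2)) - 2 * Real.log (Real.log (1 + x))) +
    (Real.log (Real.Gamma ((n:ℝ) - x - 1/2)) - 2 * Real.log (Real.log (1 + ((n:ℝ) - x))))
    with hF
  have hFconv : ConvexOn ℝ s F := by
    have h1 : ConvexOn ℝ s
        (fun x => Real.log (Real.Gamma (x - 1/2)) - 2 * Real.log (Real.log (1 + x))) :=
      my_g_convex.subset (fun x hx => hx.1) (convex_Ioo _ _)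
    have h2' := my_reflect (n:ℝ) my_g_convex
    have h2 : ConvexOn ℝ s (fun x => Real.log (Real.Gamma ((n:ℝ) - x - 1/2)) -
        2 * Real.log (Real.log (1 + ((n:ℝ) - x)))) := by
      refine (h2'.subset (fun x hx => ?_) (convex_Ioo _ _))
      · show (n:ℝ) - x ∈ Ioi ((1:ℝ)/2)
        exact mem_Ioi.2 (by have := hx.2; simp only [hs, mem_Ioo] at hx; linarith [hx.2])
    exact h1.add h2
  have hexp : ConvexOn ℝ s (fun x => Real.exp (F x)) := my_exp_comp hFconv
  -- equality of the target function with exp ∘ F on s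
  have key : ∀ x ∈ s, Real.Gamma ((n : ℝ) - x - 1 / 2) * Real.Gamma (x - 1 / 2) /
      (Real.log (1 + (n : ℝ) - x) ^ 2 * Real.log (1 + x) ^ 2) = Real.exp (F x) := by
    intro x hx
    simp only [hs, mem_Ioo] at hx
    have h1 : 0 < Real.Gamma (x - 1/2) := Real.Gamma_pos_of_pos (by linarith [hx.1])
    have h2 : 0 < Real.Gamma ((n:ℝ) - x - 1/2) := Real.Gamma_pos_of_pos (by linarith [hx.2])
    have h3 : 0 < Real.log (1 + x) := Real.log_pos (by linarith [hx.1])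
    have h4 : 0 < Real.log (1 + ((n:ℝ) - x)) := Real.log_pos (by linarith [hx.2])
    have e3 : Real.exp (2 * Real.log (Real.log (1 + x))) = Real.log (1 + x) ^ 2 := by
      rw [show (2:ℝ) * Real.log (Real.log (1 + x)) = Real.log (Real.log (1 + x) ^ 2) by
        rw [Real.log_pow]; norm_num, Real.exp_log (by positivity)]
    have e4 : Real.exp (2 * Real.log (Real.log (1 + ((n:ℝ) - x)))) =
        Real.log (1 + ((n:ℝ) - x)) ^ 2 := by
      rw [show (2:ℝ) * Real.log (Real.log (1 + ((n:ℝ) - x)))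
          = Real.log (Real.log (1 + ((n:ℝ) - x)) ^ 2) by
        rw [Real.log_pow]; norm_num, Real.exp_log (by positivity)]
    have harg : 1 + (n:ℝ) - x = 1 + ((n:ℝ) - x) := by ring
    rw [hF]
    simp only
    rw [harg, Real.exp_add, Real.exp_sub, Real.exp_sub, Real.exp_log h1, Real.exp_log h2,
      e3, e4]
    field_simp
  have hconv : ConvexOn ℝ s
      (fun x => Real.Gamma ((n : ℝ) - x - 1 / 2) * Real.Gamma (x - 1 / 2) /
        (Real.log (1 + (n : ℝ) - x) ^ 2 * Real.log (1 + x) ^ 2)) :=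
    hexp.congr fun x hx => (key x hx).symm
  refine ⟨hconv, fun x hx => ?_⟩
  -- the interval is nonempty, so n ≥ 4
  have hn4 : (4:ℝ) ≤ (n:ℝ) := by
    have := hx.1.trans hx.2; linarith
  have h2mem : (2:ℝ) ∈ s := by
    simp only [hs, mem_Ioo]; constructor <;> linarith
  have hnmem : (n:ℝ) - 2 ∈ s := by
    simp only [hs, mem_Ioo]; constructor <;> linarith
  have hmax := hconv.le_max_of_mem_Icc h2mem hnmem hx
  have hv2 : Real.Gamma ((n : ℝ) - 2 - 1 / 2) * Real.Gamma ((2:ℝ) - 1 / 2) /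
      (Real.log (1 + (n : ℝ) - 2) ^ 2 * Real.log (1 + 2) ^ 2) =
      Real.Gamma ((n : ℝ) - 5 / 2) * Real.Gamma (3 / 2) /
      (Real.log ((n : ℝ) - 1) ^ 2 * Real.log 3 ^ 2) := by
    rw [show (n:ℝ) - 2 - 1/2 = (n:ℝ) - 5/2 by ring, show (1:ℝ) + (n:ℝ) - 2 = (n:ℝ) - 1 by ring]
    norm_num
  have hvn : Real.Gamma ((n : ℝ) - ((n:ℝ) - 2) - 1 / 2) * Real.Gamma (((n:ℝ) - 2) - 1 / 2) /
      (Real.log (1 + (n : ℝ) - ((n:ℝ) - 2)) ^ 2 * Real.log (1 + ((n:ℝ) - 2)) ^ 2) =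
      Real.Gamma ((n : ℝ) - 5 / 2) * Real.Gamma (3 / 2) /
      (Real.log ((n : ℝ) - 1) ^ 2 * Real.log 3 ^ 2) := by
    rw [show (n:ℝ) - ((n:ℝ) - 2) - 1/2 = (3:ℝ)/2 by ring,
      show ((n:ℝ) - 2) - 1/2 = (n:ℝ) - 5/2 by ring,
      show (1:ℝ) + (n:ℝ) - ((n:ℝ) - 2) = (3:ℝ) by ring,
      show (1:ℝ) + ((n:ℝ) - 2) = (n:ℝ) - 1 by ring]
    ring
  rw [hv2, hvn, max_self] at hmax
  exact hmax
end

section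
/- For all ε > 0, n > 0 and natural k with 2k ≤ ε²n, the Gaussian tail moment satisfies √(n/(2π)) (∫_{−∞}^{−ε} + ∫_{ε}^{∞}) e^{−n x²/2} x^{2k} dx ≤ e^{−n ε²/2} ε^{2k}. -/
/-!
On `[ε, ∞)` write `x ^ m ≤ ε ^ m * exp (m (x - ε) / ε) ≤ ε ^ m * exp (n ε (x - ε))`, using `t ≤ exp (t - 1)`
and `m ≤ ε² n`. Since `n x² / 2 = n ε² / 2 + n (x - ε)² / 2 + n ε (x - ε)`, the factor `exp (n ε (x - ε))`
cancels and the tail moment is dominated by `exp (-n ε² / 2) ε ^ m` times a translated half-Gaussian,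
whose normalized integral is `1 / 2`. By evenness the left tail contributes the same.
-/

open MeasureTheory Set Real

theorem setIntegral_Ioi_comp_sub {E : Type*} [NormedAddCommGroup E] [NormedSpace ℝ E]
    (f : ℝ → E) (a : ℝ) : ∫ x in Ioi a, f (x - a) = ∫ x in Ioi 0, f x := by
  have hemb : MeasurableEmbedding (fun x : ℝ => x - a) :=
    (Homeomorph.subRight a).isClosedEmbedding.measurableEmbedding
  have hpre : (fun x : ℝ => x - a) ⁻¹' Ioi 0 = Ioi a := by
    ext x
    simp
  rw [← hpre]
  exact (measurePreserving_sub_right volume a).setIntegral_preimage_emb hemb f (Ioi 0)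

theorem integral_gaussian_Ioi_comp_sub (b a : ℝ) :
    ∫ x in Ioi a, exp (-b * (x - a) ^ 2) = √(π / b) / 2 :=
  (setIntegral_Ioi_comp_sub (fun t => exp (-b * t ^ 2)) a).trans (integral_gaussian_Ioi b)

theorem pow_le_pow_mul_exp_div {ε x : ℝ} (hε : 0 < ε) (hx : 0 ≤ x) (m : ℕ) :
    x ^ m ≤ ε ^ m * exp (m * (x - ε) / ε) := by
  have hratio : x / ε ≤ exp ((x - ε) / ε) := by
    calc x / ε = (x - ε) / ε + 1 := by field_simp; ring
      _ ≤ exp ((x - ε) / ε) := add_one_le_exp _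
  calc x ^ m = ε ^ m * (x / ε) ^ m := by rw [div_pow]; field_simp
    _ ≤ ε ^ m * exp ((x - ε) / ε) ^ m := by gcongr
    _ = ε ^ m * exp (m * (x - ε) / ε) := by rw [← exp_nat_mul, mul_div_assoc]

theorem exp_neg_mul_sq_mul_pow_le {ε n x : ℝ} {m : ℕ} (hε : 0 < ε) (hx : ε ≤ x)
    (hm : (m : ℝ) ≤ ε ^ 2 * n) :
    exp (-n * x ^ 2 / 2) * x ^ m ≤
      exp (-n * ε ^ 2 / 2) * ε ^ m * exp (-(n / 2) * (x - ε) ^ 2) := by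
  have hexponent : m * (x - ε) / ε ≤ n * ε * (x - ε) := by
    rw [div_le_iff₀ hε]
    nlinarith [sub_nonneg.mpr hx]
  have hpow : x ^ m ≤ ε ^ m * exp (n * ε * (x - ε)) :=
    (pow_le_pow_mul_exp_div hε (hε.le.trans hx) m).trans (by gcongr)
  have hsplit : exp (-n * x ^ 2 / 2) * exp (n * ε * (x - ε)) =
      exp (-n * ε ^ 2 / 2) * exp (-(n / 2) * (x - ε) ^ 2) := by
    rw [← exp_add, ← exp_add]
    ring_nf
  calc exp (-n * x ^ 2 / 2) * x ^ m ≤ exp (-n * x ^ 2 / 2) * (ε ^ m * exp (n * ε * (x - ε))) := by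
        gcongr
    _ = exp (-n * ε ^ 2 / 2) * ε ^ m * exp (-(n / 2) * (x - ε) ^ 2) := by
        rw [mul_left_comm, hsplit]
        ring

theorem integrable_exp_neg_mul_sq_mul_pow {n : ℝ} (hn : 0 < n) (m : ℕ) :
    Integrable fun x : ℝ => exp (-n * x ^ 2 / 2) * x ^ m := by
  have h := integrable_rpow_mul_exp_neg_mul_sq (half_pos hn)
    (neg_one_lt_zero.trans_le (Nat.cast_nonneg m))
  convert h using 2 with x
  rw [rpow_natCast, mul_comm]
  ring_nf

theorem gaussian_tail_moment_Ioi_le {ε n : ℝ} (hε : 0 < ε) (hn : 0 < n) {m : ℕ}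
    (hm : (m : ℝ) ≤ ε ^ 2 * n) :
    √(n / (2 * π)) * ∫ x in Ioi ε, exp (-n * x ^ 2 / 2) * x ^ m ≤
      exp (-n * ε ^ 2 / 2) * ε ^ m / 2 := by
  set C := exp (-n * ε ^ 2 / 2) * ε ^ m
  have hdom : ∫ x in Ioi ε, exp (-n * x ^ 2 / 2) * x ^ m ≤
      ∫ x in Ioi ε, C * exp (-(n / 2) * (x - ε) ^ 2) :=
    setIntegral_mono_on (integrable_exp_neg_mul_sq_mul_pow hn m).integrableOn
      (((integrable_exp_neg_mul_sq (half_pos hn)).comp_sub_right ε).const_mul C).integrableOn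
      measurableSet_Ioi fun x hx => exp_neg_mul_sq_mul_pow_le hε (le_of_lt hx) hm
  have hnormalize : √(n / (2 * π)) * √(π / (n / 2)) = 1 := by
    rw [← sqrt_mul (by positivity), ← sqrt_one]
    congr 1
    field_simp
  calc √(n / (2 * π)) * ∫ x in Ioi ε, exp (-n * x ^ 2 / 2) * x ^ m
      ≤ √(n / (2 * π)) * ∫ x in Ioi ε, C * exp (-(n / 2) * (x - ε) ^ 2) :=
        mul_le_mul_of_nonneg_left hdom (sqrt_nonneg _)
    _ = C / 2 := by
        rw [integral_const_mul, integral_gaussian_Ioi_comp_sub]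
        linear_combination C / 2 * hnormalize

/-- Gaussian tail moment bound: for `ε > 0`, `n > 0` and `2k ≤ ε²n`,
`√(n/(2π)) (∫_{−∞}^{−ε} + ∫_{ε}^{∞}) e^{−n x²/2} x^{2k} dx ≤ e^{−n ε²/2} ε^{2k}`. -/
theorem stmt_17 (ε n : ℝ) (hε : 0 < ε) (hn : 0 < n) (k : ℕ)
    (hk : (2 * k : ℝ) ≤ ε ^ 2 * n) :
    Real.sqrt (n / (2 * Real.pi)) *
      ((∫ x in Set.Iic (-ε), Real.exp (-n * x ^ 2 / 2) * x ^ (2 * k)) +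
        (∫ x in Set.Ici ε, Real.exp (-n * x ^ 2 / 2) * x ^ (2 * k))) ≤
      Real.exp (-n * ε ^ 2 / 2) * ε ^ (2 * k) := by
  have hleft : ∫ x in Iic (-ε), exp (-n * x ^ 2 / 2) * x ^ (2 * k) =
      ∫ x in Ioi ε, exp (-n * x ^ 2 / 2) * x ^ (2 * k) := by
    rw [← integral_comp_neg_Ioi]
    simp only [neg_sq, (even_two_mul k).neg_pow]
  have htail := gaussian_tail_moment_Ioi_le hε hn (m := 2 * k) (by exact_mod_cast hk)
  rw [hleft, integral_Ici_eq_integral_Ioi]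
  linarith
end
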